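/- Let M be a finite possibilistic Kripke structure, s a state, and Φ a set of states. Then: every path π ∈ Paths(s) satisfies ◇Φ (eventually visits Φ) if and only if Po(s ⊨ □(S\Φ)) = 0, i.e., the possibility of the set of paths from s that forever avoid Φ is zero. (The CTL formula ∀◇Φ is equivalent to the PoCTL formula Po_{=0}(□¬Φ).) -/

import Mathlib

open scoped ENNReal

/-- the set of paths of a possibilistic Kripke structure starting at `s`. -/
def PathsFrom {S : Type*} (P : S → S → ℝ≥0∞) (s : S) : Set (ℕ → S) :=
  {π | π 0 = s ∧ ∀ i, 0 < P (π i) (π (i + 1))}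

/-- the possibility `Po(s ⊨ φ)` of the set of paths from `s` satisfying `φ`. -/
noncomputable def PoSat {S : Type*} (P : S → S → ℝ≥0∞) (s : S) (φ : Set (ℕ → S)) : ℝ≥0∞ :=
  ⨆ π ∈ PathsFrom P s ∩ φ, ⨅ i, P (π i) (π (i + 1))

theorem lt_iInf_of_finite_range {α ι : Type*} [ConditionallyCompleteLinearOrder α] [Nonempty ι]
    {f : ι → α} {a : α} (hf : (Set.range f).Finite) (h : ∀ i, a < f i) : a < ⨅ i, f i := by
  obtain ⟨i, hi⟩ := (Set.range_nonempty f).csInf_mem hf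
  rw [iInf, ← hi]
  exact h i

section PossibilisticKripke

variable {S : Type*} {P : S → S → ℝ≥0∞} {s : S}

/-- In a finite structure only finitely many transition values occur along a path, so the
infimum defining its possibility is attained, hence positive. -/
theorem iInf_pos_of_mem_pathsFrom [Finite S] {π : ℕ → S} (hπ : π ∈ PathsFrom P s) :
    0 < ⨅ i, P (π i) (π (i + 1)) :=
  lt_iInf_of_finite_range
    ((Set.finite_range (Function.uncurry P)).subset
      (by rintro _ ⟨i, rfl⟩; exact ⟨(π i, π (i + 1)), rfl⟩))
    hπ.2

theorem poSat_eq_zero_iff [Finite S] {φ : Set (ℕ → S)} :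
    PoSat P s φ = 0 ↔ ∀ π ∈ PathsFrom P s, π ∉ φ := by
  simp only [PoSat, ENNReal.iSup_eq_zero]
  exact ⟨fun h π hπ hφ => (iInf_pos_of_mem_pathsFrom hπ).ne' (h π ⟨hπ, hφ⟩),
    fun h π hπ => (h π hπ.1 hπ.2).elim⟩

end PossibilisticKripke

theorem stmt16_general {S : Type*} [Fintype S] (P : S → S → ℝ≥0∞)
    (s : S) (Φ : Set S) :
    (∀ π ∈ PathsFrom P s, ∃ j, π j ∈ Φ) ↔ PoSat P s {π | ∀ j, π j ∉ Φ} = 0 := by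
  simp only [poSat_eq_zero_iff, Set.mem_ofPred_eq, not_forall, not_not]

/-- in a finite possibilistic Kripke structure, every path from `s`
eventually visits `Φ` iff the possibility of forever avoiding `Φ` is zero:
`∀◇Φ ≡ Po_{=0}(□¬Φ)`. -/
theorem stmt16 {S : Type*} [Fintype S] (P : S → S → ℝ≥0∞)
    (hP1 : ∀ s t, P s t ≤ 1) (hPn : ∀ s, (⨆ t, P s t) = 1)
    (s : S) (Φ : Set S) :
    (∀ π ∈ PathsFrom P s, ∃ j, π j ∈ Φ) ↔ PoSat P s {π | ∀ j, π j ∉ Φ} = 0 :=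
  stmt16_general P s Φ
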